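/- arXiv:2208.07626 — 5 statements merged into one kernel-verified Lean document; each statement's English description precedes it below -/
import Mathlib

section
/- In the uniform example with a recommendation threshold q̄ ∈ (0,1) (R = risky iff M ≤ q̄), a decision-maker who observes H and R and minimizes expected recommendation-dependent loss ℓ* optimally takes A = risky iff H ≤ h̄(R), where h̄(risky) = (1-q̄) + q̄·c_I/(c_I+c_II) and h̄(safe) = (1-q̄)·c_I/(c_I+c_II+Δ_II). -/
open MeasureTheory

/-- Loss: `y = true` is the bad outcome, `a = true` is the risky action. -/
noncomputable def lossFn (cI cII : ℝ) (y a : Bool) : ℝ :=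
  (if y = false ∧ a = false then cI else 0) + (if y = true ∧ a = true then cII else 0)

/-- Recommendation-dependent decision loss (Δ_I = 0): extra penalty Δ_II when the
risky action is taken against a safe recommendation and the bad outcome occurs.
`r = true` means the risky recommendation. -/
noncomputable def lossStar (cI cII ΔII : ℝ) (y a r : Bool) : ℝ :=
  lossFn cI cII y a + (if y = true ∧ a = true ∧ r = false then ΔII else 0)

/-!
Fix `H = h`. Given `h`, the recommendation splits the `M`-interval into the regions `M ≤ q̄` and
`M > q̄`, on each of which a response takes a single action. On a region, the risky action costs
`c_II` (plus `Δ_II` if the recommendation is safe) times the length of its part where `M ≥ 1 - h`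
(the bad outcome), and the safe action costs `c_I` times the length of the rest. Hence the best
action on each region is the cheaper of the two, and computing the lengths shows this is exactly
`h ≤ h̄(R)`. Fubini then integrates this `h`-wise optimality over `H`.
-/

open Set

section BoolValued

variable {α : Type*} [MeasurableSpace α] {μ : Measure α}

lemma measurable_decide {p : α → Prop} [DecidablePred p] (hp : MeasurableSet {x | p x}) :
    Measurable fun x => decide (p x) :=
  measurable_to_bool <| by convert hp; ext; simp

lemma integrableOn_comp_of_finite {β : Type*} [Finite β] [MeasurableSpace β]
    [MeasurableSingletonClass β] {f : α → β} (hf : Measurable f) (G : β → ℝ) {s : Set α}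
    (hs : μ s ≠ ⊤) : IntegrableOn (fun x => G (f x)) s μ := by
  have : IsFiniteMeasure (μ.restrict s) := isFiniteMeasure_restrict.mpr hs
  exact Integrable.of_finite.comp_measurable hf

lemma setIntegral_decide_eq_add {p : α → Prop} [DecidablePred p] (hp : MeasurableSet {x | p x})
    {s : Set α} (hs : MeasurableSet s) (F : Bool → α → ℝ)
    (hF : IntegrableOn (fun x => F (decide (p x)) x) s μ) :
    ∫ x in s, F (decide (p x)) x ∂μ =
      ∫ x in s ∩ {x | p x}, F true x ∂μ + ∫ x in s \ {x | p x}, F false x ∂μ := by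
  rw [← integral_inter_add_sdiff hp hF]
  congr 1 <;> refine setIntegral_congr_fun (by measurability) fun x hx => ?_
  · simp [show p x from hx.2]
  · simp [show ¬p x from hx.2]

lemma setIntegral_comp_decide {p : α → Prop} [DecidablePred p] (hp : MeasurableSet {x | p x})
    {s : Set α} (hs : MeasurableSet s) (hμs : μ s ≠ ⊤) (G : Bool → ℝ) :
    ∫ x in s, G (decide (p x)) ∂μ =
      G true * μ.real (s ∩ {x | p x}) + G false * μ.real (s \ {x | p x}) := by
  rw [setIntegral_decide_eq_add hp hs (fun b _ => G b)
    (integrableOn_comp_of_finite (measurable_decide hp) G hμs), setIntegral_const,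
    setIntegral_const, smul_eq_mul, smul_eq_mul, mul_comm, mul_comm (μ.real _)]

lemma Bool.apply_decide_le {β : Type*} [LinearOrder β] (f : Bool → β) (b : Bool) :
    f (decide (f true ≤ f false)) ≤ f b := by
  by_cases h : f true ≤ f false <;> cases b <;> simp [h]
  exact (not_le.mp h).le

end BoolValued

lemma setIntegral_prod_mono {α β : Type*} [MeasurableSpace α] [MeasurableSpace β]
    {μ : Measure α} {ν : Measure β} [SFinite μ] [SFinite ν] {f g : α × β → ℝ} {s : Set α}
    {t : Set β} (hs : MeasurableSet s) (hf : IntegrableOn f (s ×ˢ t) (μ.prod ν))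
    (hg : IntegrableOn g (s ×ˢ t) (μ.prod ν))
    (hfg : ∀ x ∈ s, ∫ y in t, f (x, y) ∂ν ≤ ∫ y in t, g (x, y) ∂ν) :
    ∫ z in s ×ˢ t, f z ∂μ.prod ν ≤ ∫ z in s ×ˢ t, g z ∂μ.prod ν := by
  rw [setIntegral_prod f hf, setIntegral_prod g hg]
  rw [IntegrableOn, ← Measure.prod_restrict] at hf hg
  exact setIntegral_mono_on hf.integral_prod_left hg.integral_prod_left hs hfg

/-- The expected `lossStar` of action `b` under recommendation `r`, when the bad and the good
outcome have masses `A` and `B`. -/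
noncomputable def expectedLossStar (cI cII ΔII A B : ℝ) (b r : Bool) : ℝ :=
  lossStar cI cII ΔII true b r * A + lossStar cI cII ΔII false b r * B

@[simp]
lemma expectedLossStar_true (cI cII ΔII A B : ℝ) (r : Bool) :
    expectedLossStar cI cII ΔII A B true r = (cII + if r then 0 else ΔII) * A := by
  cases r <;> simp [expectedLossStar, lossStar, lossFn]

@[simp]
lemma expectedLossStar_false (cI cII ΔII A B : ℝ) (r : Bool) :
    expectedLossStar cI cII ΔII A B false r = cI * B := by
  cases r <;> simp [expectedLossStar, lossStar, lossFn]

noncomputable def responseThreshold (cI cII ΔII q : ℝ) : Bool → ℝ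
  | true => (1 - q) + q * (cI / (cI + cII))
  | false => (1 - q) * (cI / (cI + cII + ΔII))

lemma le_responseThreshold_true_iff {cI cII ΔII q h : ℝ} (hcI : 0 ≤ cI) (hcII : 0 < cII)
    (hq : 0 ≤ q) :
    h ≤ responseThreshold cI cII ΔII q true ↔
      cII * max (q - (1 - h)) 0 ≤ cI * (q - max (q - (1 - h)) 0) := by
  have hD : 0 < cI + cII := by linarith
  have hT : responseThreshold cI cII ΔII q true = (cI + cII * (1 - q)) / (cI + cII) := by
    simp only [responseThreshold]; field_simp; ring
  rw [hT, le_div_iff₀ hD]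
  rcases le_total (q - (1 - h)) 0 with hw | hw
  · rw [max_eq_right hw]
    exact iff_of_true (by nlinarith) (by simpa using mul_nonneg hcI hq)
  · rw [max_eq_left hw]
    constructor <;> intro <;> linarith

lemma le_responseThreshold_false_iff {cI cII ΔII q h : ℝ} (hcI : 0 ≤ cI) (hcII : 0 < cII)
    (hΔ : 0 ≤ ΔII) (hq : q < 1) :
    h ≤ responseThreshold cI cII ΔII q false ↔
      (cII + ΔII) * ((1 - q) - max ((1 - h) - q) 0) ≤ cI * max ((1 - h) - q) 0 := by
  have hC : 0 < cI + cII + ΔII := by linarith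
  have hT : responseThreshold cI cII ΔII q false = (1 - q) * cI / (cI + cII + ΔII) := by
    simp only [responseThreshold]; ring
  rw [hT, le_div_iff₀ hC]
  rcases le_total ((1 - h) - q) 0 with hv | hv
  · rw [max_eq_right hv]
    refine iff_of_false (fun h' => ?_) (fun h' => ?_) <;> nlinarith
  · rw [max_eq_left hv]
    constructor <;> intro <;> linarith

section UniformExample

variable {cI cII ΔII q : ℝ}

lemma measurable_lossStar_response {a : ℝ → Bool → Bool}
    (ha : Measurable fun p : ℝ × Bool => a p.1 p.2) :
    Measurable fun p : ℝ × ℝ =>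
      (decide (1 ≤ p.1 + p.2), a p.1 (decide (p.2 ≤ q)), decide (p.2 ≤ q)) := by
  have hR : Measurable fun p : ℝ × ℝ => decide (p.2 ≤ q) :=
    measurable_decide (measurableSet_le measurable_snd measurable_const)
  exact (measurable_decide (measurableSet_le measurable_const (by fun_prop))).prodMk
    ((ha.comp (measurable_fst.prodMk hR)).prodMk hR)

lemma measurableSet_setOf_one_le_add (h : ℝ) : MeasurableSet {m : ℝ | 1 ≤ h + m} :=
  measurableSet_le measurable_const (by fun_prop)

lemma volume_real_Icc_inter_setOf_one_le_add {h : ℝ} (hh : h ≤ 1) :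
    volume.real (Icc 0 q ∩ {m | 1 ≤ h + m}) = max (q - (1 - h)) 0 := by
  rw [← Real.volume_real_Icc]
  congr 1
  ext m
  simp only [mem_inter_iff, mem_Icc, mem_ofPred_eq]
  grind

lemma volume_real_Ioc_sdiff_setOf_one_le_add {h : ℝ} (hh : 0 ≤ h) :
    volume.real (Ioc q 1 \ {m | 1 ≤ h + m}) = max ((1 - h) - q) 0 := by
  rw [← Real.volume_real_Ioo]
  congr 1
  ext m
  simp only [mem_sdiff, mem_Ioc, mem_Ioo, mem_ofPred_eq]
  grind

lemma volume_real_Icc_sdiff_setOf_one_le_add (hq : 0 ≤ q) {h : ℝ} (hh : h ≤ 1) :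
    volume.real (Icc 0 q \ {m | 1 ≤ h + m}) = q - max (q - (1 - h)) 0 := by
  have := measureReal_inter_add_sdiff (μ := volume) (s := Icc 0 q)
    (measurableSet_setOf_one_le_add h) measure_Icc_lt_top.ne
  rw [volume_real_Icc_inter_setOf_one_le_add hh, Real.volume_real_Icc_of_le hq, sub_zero] at this
  linarith

lemma volume_real_Ioc_inter_setOf_one_le_add (hq : q ≤ 1) {h : ℝ} (hh : 0 ≤ h) :
    volume.real (Ioc q 1 ∩ {m | 1 ≤ h + m}) = (1 - q) - max ((1 - h) - q) 0 := by
  have := measureReal_inter_add_sdiff (μ := volume) (s := Ioc q 1)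
    (measurableSet_setOf_one_le_add h) measure_Ioc_lt_top.ne
  rw [volume_real_Ioc_sdiff_setOf_one_le_add hh, Real.volume_real_Ioc_of_le hq] at this
  linarith

lemma setIntegral_lossStar_eq_expectedLossStar (hq : q ∈ Icc (0 : ℝ) 1) {h : ℝ}
    (hh : h ∈ Icc (0 : ℝ) 1) (g : Bool → Bool) :
    ∫ m in Icc (0 : ℝ) 1, lossStar cI cII ΔII (decide (1 ≤ h + m)) (g (decide (m ≤ q)))
        (decide (m ≤ q)) =
      expectedLossStar cI cII ΔII (max (q - (1 - h)) 0) (q - max (q - (1 - h)) 0) (g true) true +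
      expectedLossStar cI cII ΔII ((1 - q) - max ((1 - h) - q) 0) (max ((1 - h) - q) 0)
        (g false) false := by
  have hR : MeasurableSet {m : ℝ | m ≤ q} := measurableSet_Iic
  have hY := measurableSet_setOf_one_le_add h
  have risky_region : Icc (0 : ℝ) 1 ∩ {m | m ≤ q} = Icc 0 q := by
    ext m; simp only [mem_inter_iff, mem_Icc, mem_ofPred_eq]; grind
  have safe_region : Icc (0 : ℝ) 1 \ {m | m ≤ q} = Ioc q 1 := by
    ext m; simp only [mem_sdiff, mem_Icc, mem_Ioc, mem_ofPred_eq]; grind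
  rw [setIntegral_decide_eq_add hR measurableSet_Icc
      (fun r m => lossStar cI cII ΔII (decide (1 ≤ h + m)) (g r) r)
      (integrableOn_comp_of_finite ((measurable_decide hY).prodMk (measurable_decide hR))
        (fun z => lossStar cI cII ΔII z.1 (g z.2) z.2) measure_Icc_lt_top.ne),
    risky_region, safe_region,
    setIntegral_comp_decide hY measurableSet_Icc measure_Icc_lt_top.ne
      (fun y => lossStar cI cII ΔII y (g true) true),
    setIntegral_comp_decide hY measurableSet_Ioc measure_Ioc_lt_top.ne
      (fun y => lossStar cI cII ΔII y (g false) false),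
    volume_real_Icc_inter_setOf_one_le_add hh.2, volume_real_Icc_sdiff_setOf_one_le_add hq.1 hh.2,
    volume_real_Ioc_inter_setOf_one_le_add hq.2 hh.1, volume_real_Ioc_sdiff_setOf_one_le_add hh.1]
  rfl

lemma setIntegral_lossStar_responseThreshold_le (hcI : 0 ≤ cI) (hcII : 0 < cII) (hΔ : 0 ≤ ΔII)
    (hq : q ∈ Ioo (0 : ℝ) 1) {h : ℝ} (hh : h ∈ Icc (0 : ℝ) 1) (g : Bool → Bool) :
    ∫ m in Icc (0 : ℝ) 1, lossStar cI cII ΔII (decide (1 ≤ h + m))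
        (decide (h ≤ responseThreshold cI cII ΔII q (decide (m ≤ q)))) (decide (m ≤ q)) ≤
      ∫ m in Icc (0 : ℝ) 1, lossStar cI cII ΔII (decide (1 ≤ h + m)) (g (decide (m ≤ q)))
        (decide (m ≤ q)) := by
  have hq' : q ∈ Icc (0 : ℝ) 1 := Ioo_subset_Icc_self hq
  have risky : decide (h ≤ responseThreshold cI cII ΔII q true) =
      decide (cII * max (q - (1 - h)) 0 ≤ cI * (q - max (q - (1 - h)) 0)) :=
    decide_eq_decide.mpr (le_responseThreshold_true_iff hcI hcII hq.1.le)
  have safe : decide (h ≤ responseThreshold cI cII ΔII q false) =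
      decide ((cII + ΔII) * ((1 - q) - max ((1 - h) - q) 0) ≤ cI * max ((1 - h) - q) 0) :=
    decide_eq_decide.mpr (le_responseThreshold_false_iff hcI hcII hΔ hq.2)
  rw [setIntegral_lossStar_eq_expectedLossStar hq' hh
      (fun r => decide (h ≤ responseThreshold cI cII ΔII q r)),
    setIntegral_lossStar_eq_expectedLossStar hq' hh g, risky, safe]
  gcongr ?_ + ?_
  · simpa using Bool.apply_decide_le (fun b => expectedLossStar cI cII ΔII _ _ b true) (g true)
  · simpa using Bool.apply_decide_le (fun b => expectedLossStar cI cII ΔII _ _ b false) (g false)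

lemma integrableOn_lossStar_response {s : Set (ℝ × ℝ)} {μ : Measure (ℝ × ℝ)} (hs : μ s ≠ ⊤)
    {a : ℝ → Bool → Bool} (ha : Measurable fun p : ℝ × Bool => a p.1 p.2) :
    IntegrableOn (fun p : ℝ × ℝ => lossStar cI cII ΔII (decide (1 ≤ p.1 + p.2))
      (a p.1 (decide (p.2 ≤ q))) (decide (p.2 ≤ q))) s μ :=
  integrableOn_comp_of_finite (measurable_lossStar_response ha)
    (fun z => lossStar cI cII ΔII z.1 z.2.1 z.2.2) hs

end UniformExample

/-- With recommendation R = risky iff M ≤ q̄, the decision-maker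
minimizing expected recommendation-dependent loss optimally takes risky iff
H ≤ h̄(R), with h̄(risky) = (1-q̄) + q̄·cI/(cI+cII) and
h̄(safe) = (1-q̄)·cI/(cI+cII+Δ_II). -/
theorem recommendation_dependent_response_optimal
    (cI cII ΔII q : ℝ) (hcI : 0 < cI) (hcII : 0 < cII) (hΔ : 0 ≤ ΔII)
    (hq : q ∈ Set.Ioo (0:ℝ) 1)
    (hbar : Bool → ℝ)
    (hbarR : hbar true = (1 - q) + q * (cI / (cI + cII)))
    (hbarS : hbar false = (1 - q) * (cI / (cI + cII + ΔII)))
    (a : ℝ → Bool → Bool) (ha : Measurable fun p : ℝ × Bool => a p.1 p.2) :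
    ∫ p in Set.Icc (0:ℝ) 1 ×ˢ Set.Icc (0:ℝ) 1,
        lossStar cI cII ΔII (decide (1 ≤ p.1 + p.2))
          (decide (p.1 ≤ hbar (decide (p.2 ≤ q)))) (decide (p.2 ≤ q))
      ≤ ∫ p in Set.Icc (0:ℝ) 1 ×ˢ Set.Icc (0:ℝ) 1,
        lossStar cI cII ΔII (decide (1 ≤ p.1 + p.2))
          (a p.1 (decide (p.2 ≤ q))) (decide (p.2 ≤ q)) := by
  obtain rfl : hbar = responseThreshold cI cII ΔII q := funext fun r => by
    cases r
    exacts [hbarS, hbarR]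
  have hfin : (volume.prod volume) (Icc (0 : ℝ) 1 ×ˢ Icc (0 : ℝ) 1) ≠ ⊤ := by
    rw [Measure.prod_prod]
    exact ENNReal.mul_ne_top measure_Icc_lt_top.ne measure_Icc_lt_top.ne
  have hthreshold :
      Measurable fun p : ℝ × Bool => decide (p.1 ≤ responseThreshold cI cII ΔII q p.2) :=
    measurable_from_prod_countable_left fun r =>
      measurable_decide (measurableSet_Iic (a := responseThreshold cI cII ΔII q r))
  rw [Measure.volume_eq_prod]
  refine setIntegral_prod_mono measurableSet_Icc
    (integrableOn_lossStar_response (a := fun x r => decide (x ≤ responseThreshold cI cII ΔII q r))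
      hfin hthreshold) (integrableOn_lossStar_response hfin ha) fun h hh => ?_
  exact setIntegral_lossStar_responseThreshold_le hcI.le hcII hΔ hq hh (a h)
end

section
/- The optimal threshold q̄*(Δ_II) = (1 + g(Δ_II)) / (2 + g(Δ_II)) with g(Δ) = c_I·Δ²/(c_II·(c_I+c_II+Δ)²) is monotonically increasing in Δ_II on [0, ∞), equals 1/2 at Δ_II = 0, and converges to (1 + c_I/c_II)/(2 + c_I/c_II) = (c_I+c_II)/(c_I+2c_II) as Δ_II → ∞. -/
/-!
Writing `g Δ = (cI / cII) * (Δ / (cI + cII + Δ)) ^ 2`, the threshold is the increasing map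
`x ↦ (1 + x) / (2 + x)` applied to `g`, which is increasing on `[0, ∞)` with limit `cI / cII`.
-/

open Filter Set Topology

lemma monotoneOn_one_add_div_two_add :
    MonotoneOn (fun x : ℝ => (1 + x) / (2 + x)) (Ioi (-2)) := by
  intro a ha b hb hab
  simp only [mem_Ioi] at ha hb
  rw [div_le_div_iff₀ (by linarith) (by linarith)]
  linarith

lemma monotoneOn_div_const_add {s : ℝ} (hs : 0 < s) :
    MonotoneOn (fun x : ℝ => x / (s + x)) (Ici 0) := by
  intro a ha b hb hab
  simp only [mem_Ici] at ha hb
  rw [div_le_div_iff₀ (by linarith) (by linarith)]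
  nlinarith

lemma tendsto_div_const_add_atTop (s : ℝ) :
    Tendsto (fun x : ℝ => x / (s + x)) atTop (𝓝 1) := by
  have hlim : Tendsto (fun x : ℝ => 1 - s / (s + x)) atTop (𝓝 (1 - 0)) :=
    tendsto_const_nhds.sub <| tendsto_const_nhds.div_atTop <|
      tendsto_atTop_add_const_left _ _ tendsto_id
  rw [sub_zero] at hlim
  refine hlim.congr' ?_
  filter_upwards [eventually_gt_atTop (-s)] with x hx
  field_simp [show s + x ≠ 0 by linarith]
  ring

lemma one_add_div_div_two_add_div (a : ℝ) {b : ℝ} (hb : b ≠ 0) :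
    (1 + a / b) / (2 + a / b) = (a + b) / (a + 2 * b) := by
  field_simp
  ring

/-- q̄*(Δ) = (1+g(Δ))/(2+g(Δ)), g(Δ) = cI·Δ²/(cII·(cI+cII+Δ)²),
is monotonically increasing on [0,∞), equals 1/2 at Δ = 0, and converges to
(1 + cI/cII)/(2 + cI/cII) = (cI+cII)/(cI+2cII) as Δ → ∞. -/
theorem optimal_threshold_comparative_statics
    (cI cII : ℝ) (hcI : 0 < cI) (hcII : 0 < cII) :
    let g : ℝ → ℝ := fun Δ => cI * Δ ^ 2 / (cII * (cI + cII + Δ) ^ 2)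
    let qstar : ℝ → ℝ := fun Δ => (1 + g Δ) / (2 + g Δ)
    MonotoneOn qstar (Set.Ici 0) ∧
    qstar 0 = 1/2 ∧
    (1 + cI / cII) / (2 + cI / cII) = (cI + cII) / (cI + 2 * cII) ∧
    Filter.Tendsto qstar Filter.atTop (nhds ((cI + cII) / (cI + 2 * cII))) := by
  intro g qstar
  have hg : g = fun Δ => cI / cII * (Δ / (cI + cII + Δ)) ^ 2 := by
    funext Δ
    rw [div_pow, div_mul_div_comm]
  have hk : 0 ≤ cI / cII := by positivity
  have hg_mono : MonotoneOn g (Ici 0) := hg ▸ fun a ha b hb hab =>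
    mul_le_mul_of_nonneg_left (pow_le_pow_left₀ (by simp only [mem_Ici] at ha; positivity)
      (monotoneOn_div_const_add (by positivity) ha hb hab) 2) hk
  have hg_maps : MapsTo g (Ici 0) (Ioi (-2)) := fun Δ hΔ => by
    simp only [mem_Ici, mem_Ioi] at hΔ ⊢
    rw [hg]
    have : 0 ≤ cI / cII * (Δ / (cI + cII + Δ)) ^ 2 := by positivity
    linarith
  have hg_lim : Tendsto g atTop (𝓝 (cI / cII)) := by
    simpa [hg] using (tendsto_div_const_add_atTop (cI + cII)).pow 2 |>.const_mul (cI / cII)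
  have hlimit := one_add_div_div_two_add_div cI hcII.ne'
  refine ⟨monotoneOn_one_add_div_two_add.comp hg_mono hg_maps, by simp [qstar, g], hlimit, ?_⟩
  rw [← hlimit]
  exact (hg_lim.const_add 1).div (hg_lim.const_add 2) (by positivity)
end

section
/- In the uniform example with three-level recommendations (risky if M ≤ q_low, don't know if q_low < M ≤ q_high, safe if M > q_high), the optimal thresholds satisfy q_high = 2·q_low, and the optimal q_low equals 1 / (2 + c_II·(c_I+c_II+Δ_II)²/((c_I+c_II)·((c_II+Δ_II)² + c_I·c_II))). -/
/-! Given `M = m`, a human who takes the risky action iff `H ≤ 1 - c` loses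
`cI (c - m)⁺ + cII (m - c)⁺`; integrating this tent over a recommendation cell `(lo, hi]`
gives `(hi - lo)² (cI (1 - r)² + cII r²) / 2` with `r = cI / (cI + cII + Δ)`. Summing the three
cells, the designer's loss is `(A ql² + A (qh - ql)² + B (1 - qh)²) / 2` with `A, B > 0`, a
positive definite quadratic whose unique minimiser on the feasible triangle is
`ql = B / (A + 2B)`, `qh = 2 ql`. -/

open MeasureTheory

/-- The optimal human signal threshold when the recommendation reveals
M ∈ (lo, hi] and the perceived Type-II cost is cII + Δ: take risky iff
H ≤ 1 - hi + (hi - lo)·cI/(cI+cII+Δ). -/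
noncomputable def hth (cI cII Δ lo hi : ℝ) : ℝ :=
  1 - hi + (hi - lo) * (cI / (cI + cII + Δ))

/-- Optimal human response to the three-level recommendation with thresholds
ql ≤ qh: the extra decision loss Δ_II applies only after a safe recommendation. -/
noncomputable def act3 (cI cII ΔII ql qh h m : ℝ) : Bool :=
  if m ≤ ql then decide (h ≤ hth cI cII 0 0 ql)
  else if m ≤ qh then decide (h ≤ hth cI cII 0 ql qh)
  else decide (h ≤ hth cI cII ΔII qh 1)

/-- Designer's expected loss under a three-level recommendation. -/
noncomputable def L3 (cI cII ΔII ql qh : ℝ) : ℝ :=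
  ∫ p in Set.Icc (0:ℝ) 1 ×ˢ Set.Icc (0:ℝ) 1,
    lossFn cI cII (decide (1 ≤ p.1 + p.2)) (act3 cI cII ΔII ql qh p.1 p.2)

open Set

section Integrals

variable {cI cII : ℝ}

lemma lossFn_decide_le (t m h : ℝ) :
    lossFn cI cII (decide (1 ≤ h + m)) (decide (h ≤ t)) =
      (Ioo t (1 - m)).indicator (fun _ => cI) h + (Icc (1 - m) t).indicator (fun _ => cII) h := by
  by_cases hy : 1 ≤ h + m <;> by_cases ha : h ≤ t <;>
    simp [lossFn, indicator_apply, hy, ha]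

lemma integral_lossFn_decide_le {t m : ℝ} (ht₀ : 0 ≤ t) (ht₁ : t ≤ 1) (hm₀ : 0 ≤ m)
    (hm₁ : m ≤ 1) :
    ∫ h in Icc (0 : ℝ) 1, lossFn cI cII (decide (1 ≤ h + m)) (decide (h ≤ t)) =
      cI * max (1 - t - m) 0 + cII * max (m - (1 - t)) 0 := by
  have hfin : volume (Icc (0 : ℝ) 1) ≠ ⊤ := measure_Icc_lt_top.ne
  have hIoo : Ioo t (1 - m) ⊆ Icc 0 1 := fun x hx => ⟨by linarith [hx.1], by linarith [hx.2]⟩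
  have hIcc : Icc (1 - m) t ⊆ Icc 0 1 := fun x hx => ⟨by linarith [hx.1], by linarith [hx.2]⟩
  simp only [lossFn_decide_le]
  rw [integral_add ((integrableOn_const hfin).indicator measurableSet_Ioo).integrable
      ((integrableOn_const hfin).indicator measurableSet_Icc).integrable,
    setIntegral_indicator measurableSet_Ioo, setIntegral_indicator measurableSet_Icc,
    inter_eq_self_of_subset_right hIoo, inter_eq_self_of_subset_right hIcc,
    setIntegral_const, setIntegral_const, Real.volume_real_Ioo, Real.volume_real_Icc,
    smul_eq_mul, smul_eq_mul]
  ring_nf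

lemma integral_tent {lo hi c : ℝ} (hlo : lo ≤ c) (hhi : c ≤ hi) :
    ∫ m in Ioc lo hi, (cI * max (c - m) 0 + cII * max (m - c) 0) =
      cI * (c - lo) ^ 2 / 2 + cII * (hi - c) ^ 2 / 2 := by
  have hcont : Continuous fun m : ℝ => cI * max (c - m) 0 + cII * max (m - c) 0 := by fun_prop
  have hleft : ∫ m in lo..c, (cI * max (c - m) 0 + cII * max (m - c) 0) =
      ∫ m in lo..c, cI * (c - m) := by
    refine intervalIntegral.integral_congr fun x hx => ?_
    rw [uIcc_of_le hlo] at hx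
    simp only [max_eq_left (sub_nonneg.2 hx.2), max_eq_right (sub_nonpos.2 hx.2), mul_zero,
      add_zero]
  have hright : ∫ m in c..hi, (cI * max (c - m) 0 + cII * max (m - c) 0) =
      ∫ m in c..hi, cII * (m - c) := by
    refine intervalIntegral.integral_congr fun x hx => ?_
    rw [uIcc_of_le hhi] at hx
    simp only [max_eq_right (sub_nonpos.2 hx.1), max_eq_left (sub_nonneg.2 hx.1), mul_zero,
      zero_add]
  rw [← intervalIntegral.integral_of_le (hlo.trans hhi),
    ← intervalIntegral.integral_add_adjacent_intervals (hcont.intervalIntegrable lo c)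
      (hcont.intervalIntegrable c hi), hleft, hright]
  simp only [intervalIntegral.integral_const_mul,
    intervalIntegral.integral_comp_sub_left fun x => x, sub_self, integral_id, ne_eq,
    OfNat.ofNat_ne_zero, not_false_eq_true, zero_pow, sub_zero,
    intervalIntegral.intervalIntegrable_id, intervalIntegrable_const, intervalIntegral.integral_sub,
    intervalIntegral.integral_const, smul_eq_mul]
  ring

lemma integral_Ioc_integral_lossFn_hth {Δ lo hi : ℝ} {act : ℝ → ℝ → Bool} (hcI : 0 ≤ cI)
    (hcIIΔ : 0 ≤ cII + Δ) (hlo : 0 ≤ lo) (hlohi : lo ≤ hi) (hhi : hi ≤ 1)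
    (hact : ∀ m ∈ Ioc lo hi, ∀ h, act h m = decide (h ≤ hth cI cII Δ lo hi)) :
    ∫ m in Ioc lo hi, ∫ h in Icc (0 : ℝ) 1, lossFn cI cII (decide (1 ≤ h + m)) (act h m) =
      (hi - lo) ^ 2 * (cI * (1 - cI / (cI + cII + Δ)) ^ 2 + cII * (cI / (cI + cII + Δ)) ^ 2)
        / 2 := by
  set r := cI / (cI + cII + Δ)
  have hr₀ : 0 ≤ r := div_nonneg hcI (by linarith)
  have hr₁ : r ≤ 1 := div_le_one_of_le₀ (by linarith) (by linarith)
  have ht : hth cI cII Δ lo hi = 1 - hi + (hi - lo) * r := rfl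
  have hinner : ∀ m ∈ Ioc lo hi,
      ∫ h in Icc (0 : ℝ) 1, lossFn cI cII (decide (1 ≤ h + m)) (act h m) =
        cI * max (1 - hth cI cII Δ lo hi - m) 0 + cII * max (m - (1 - hth cI cII Δ lo hi)) 0 :=
    fun m hm => by
      simp_rw [hact m hm]
      exact integral_lossFn_decide_le (by rw [ht]; nlinarith) (by rw [ht]; nlinarith)
        (hlo.trans hm.1.le) (hm.2.trans hhi)
  rw [setIntegral_congr_fun measurableSet_Ioc hinner,
    integral_tent (by rw [ht]; nlinarith) (by rw [ht]; nlinarith), ht]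
  ring

end Integrals

lemma measurable_decide_le {α : Type*} [MeasurableSpace α] {f g : α → ℝ} (hf : Measurable f)
    (hg : Measurable g) : Measurable fun p => decide (f p ≤ g p) :=
  measurable_to_bool <| by
    simpa only [preimage, mem_singleton_iff, decide_eq_true_eq] using measurableSet_le hf hg

lemma norm_lossFn_le (cI cII : ℝ) (y a : Bool) : ‖lossFn cI cII y a‖ ≤ |cI| + |cII| := by
  cases y <;> cases a <;> simp [lossFn] <;> positivity

lemma setIntegral_Icc_eq_add_add {f : ℝ → ℝ} {a b c d : ℝ} (hf : IntegrableOn f (Icc a d))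
    (hab : a ≤ b) (hbc : b ≤ c) (hcd : c ≤ d) :
    ∫ x in Icc a d, f x =
      (∫ x in Ioc a b, f x) + (∫ x in Ioc b c, f x) + ∫ x in Ioc c d, f x := by
  have hii : ∀ x ∈ Icc a d, ∀ y ∈ Icc a d, IntervalIntegrable f volume x y :=
    fun x hx y hy => (hf.mono_set (uIcc_subset_Icc hx hy)).intervalIntegrable
  have had : a ≤ d := hab.trans (hbc.trans hcd)
  have ha : a ∈ Icc a d := left_mem_Icc.2 had
  have hb : b ∈ Icc a d := ⟨hab, hbc.trans hcd⟩
  have hc : c ∈ Icc a d := ⟨hab.trans hbc, hcd⟩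
  have hd : d ∈ Icc a d := right_mem_Icc.2 had
  rw [integral_Icc_eq_integral_Ioc, ← intervalIntegral.integral_of_le had,
    ← intervalIntegral.integral_add_adjacent_intervals (hii a ha b hb) (hii b hb d hd),
    ← intervalIntegral.integral_add_adjacent_intervals (hii b hb c hc) (hii c hc d hd),
    intervalIntegral.integral_of_le hab, intervalIntegral.integral_of_le hbc,
    intervalIntegral.integral_of_le hcd, add_assoc]

section Quadratic

variable {A B q x y : ℝ}

def threeCellLoss (A B x y : ℝ) : ℝ := A * x ^ 2 + A * (y - x) ^ 2 + B * (1 - y) ^ 2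

-- `A q = B (1 - 2q)` is the stationarity condition of `threeCellLoss A B` on the line `y = 2x`.
lemma threeCellLoss_eq_add (hq : A * q = B * (1 - 2 * q)) :
    threeCellLoss A B x y = threeCellLoss A B q (2 * q) +
      (A * (x - q) ^ 2 + A * (y - x - q) ^ 2 + B * (y - 2 * q) ^ 2) := by
  unfold threeCellLoss
  linear_combination (2 * (y - 2 * q)) * hq

lemma threeCellLoss_le (hA : 0 ≤ A) (hB : 0 ≤ B) (hq : A * q = B * (1 - 2 * q)) :
    threeCellLoss A B q (2 * q) ≤ threeCellLoss A B x y := by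
  rw [threeCellLoss_eq_add (x := x) (y := y) hq]
  have := mul_nonneg hA (sq_nonneg (x - q))
  have := mul_nonneg hA (sq_nonneg (y - x - q))
  have := mul_nonneg hB (sq_nonneg (y - 2 * q))
  linarith

lemma eq_of_threeCellLoss_eq (hA : 0 < A) (hB : 0 < B) (hq : A * q = B * (1 - 2 * q))
    (h : threeCellLoss A B x y = threeCellLoss A B q (2 * q)) : x = q ∧ y = 2 * q := by
  rw [threeCellLoss_eq_add hq, add_eq_left] at h
  have h₁ := mul_nonneg hA.le (sq_nonneg (x - q))
  have h₂ := mul_nonneg hA.le (sq_nonneg (y - x - q))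
  have h₃ := mul_nonneg hB.le (sq_nonneg (y - 2 * q))
  have hx : (x - q) ^ 2 = 0 := (mul_eq_zero.1 (by linarith)).resolve_left hA.ne'
  have hy : (y - 2 * q) ^ 2 = 0 := (mul_eq_zero.1 (by linarith)).resolve_left hB.ne'
  exact ⟨by simpa [sub_eq_zero] using hx, by simpa [sub_eq_zero] using hy⟩

end Quadratic

section Designer

variable {cI cII ΔII ql qh : ℝ}

lemma integrable_lossFn_act3 :
    Integrable (fun p : ℝ × ℝ =>
        lossFn cI cII (decide (1 ≤ p.1 + p.2)) (act3 cI cII ΔII ql qh p.1 p.2))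
      ((volume.restrict (Icc (0 : ℝ) 1)).prod (volume.restrict (Icc (0 : ℝ) 1))) := by
  have hact : Measurable fun p : ℝ × ℝ => act3 cI cII ΔII ql qh p.1 p.2 :=
    Measurable.ite (measurableSet_le measurable_snd measurable_const)
      (measurable_decide_le measurable_fst measurable_const) <|
      Measurable.ite (measurableSet_le measurable_snd measurable_const)
        (measurable_decide_le measurable_fst measurable_const)
        (measurable_decide_le measurable_fst measurable_const)
  have hloss : Measurable fun p : ℝ × ℝ =>
      lossFn cI cII (decide (1 ≤ p.1 + p.2)) (act3 cI cII ΔII ql qh p.1 p.2) :=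
    (Measurable.of_discrete (f := fun q : Bool × Bool => lossFn cI cII q.1 q.2)).comp
      ((measurable_decide_le measurable_const (by fun_prop)).prodMk hact)
  exact .of_bound hloss.aestronglyMeasurable (|cI| + |cII|)
    (ae_of_all _ fun p => norm_lossFn_le _ _ _ _)

lemma L3_eq_integral_integral :
    L3 cI cII ΔII ql qh = ∫ m in Icc (0 : ℝ) 1, ∫ h in Icc (0 : ℝ) 1,
      lossFn cI cII (decide (1 ≤ h + m)) (act3 cI cII ΔII ql qh h m) := by
  rw [L3, Measure.volume_eq_prod, ← Measure.prod_restrict]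
  exact integral_prod_symm _ integrable_lossFn_act3

lemma L3_eq_threeCellLoss (hcI : 0 < cI) (hcII : 0 < cII) (hΔ : 0 ≤ ΔII) (hql : 0 ≤ ql)
    (hqlh : ql ≤ qh) (hqh : qh ≤ 1) :
    L3 cI cII ΔII ql qh = threeCellLoss (cI * cII / (cI + cII))
      (cI * ((cII + ΔII) ^ 2 + cI * cII) / (cI + cII + ΔII) ^ 2) ql qh / 2 := by
  have houter : IntegrableOn (fun m => ∫ h in Icc (0 : ℝ) 1,
      lossFn cI cII (decide (1 ≤ h + m)) (act3 cI cII ΔII ql qh h m)) (Icc 0 1) :=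
    integrable_lossFn_act3.integral_prod_right
  rw [L3_eq_integral_integral, setIntegral_Icc_eq_add_add houter hql hqlh hqh,
    integral_Ioc_integral_lossFn_hth (Δ := 0) hcI.le (by linarith) le_rfl hql (hqlh.trans hqh)
      fun m hm h => by rw [act3, if_pos hm.2],
    integral_Ioc_integral_lossFn_hth (Δ := 0) hcI.le (by linarith) hql hqlh hqh
      fun m hm h => by rw [act3, if_neg (not_le.2 hm.1), if_pos hm.2],
    integral_Ioc_integral_lossFn_hth (Δ := ΔII) hcI.le (by linarith) (hql.trans hqlh) hqh le_rfl
      fun m hm h => by rw [act3, if_neg (not_le.2 (hqlh.trans_lt hm.1)), if_neg (not_le.2 hm.1)]]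
  have : 0 < cI + cII + ΔII := by linarith
  unfold threeCellLoss
  field_simp
  ring

end Designer

/-- In the uniform example with three-level recommendations, the
optimal thresholds satisfy q_high = 2·q_low with q_low given by the explicit
formula; the pair (q_low, 2·q_low) minimizes the designer's expected loss over
all feasible threshold pairs, and is the unique minimizer. -/
theorem three_level_optimal_thresholds
    (cI cII ΔII : ℝ) (hcI : 0 < cI) (hcII : 0 < cII) (hΔ : 0 ≤ ΔII) :
    let qlo := 1 / (2 + cII * (cI + cII + ΔII) ^ 2
      / ((cI + cII) * ((cII + ΔII) ^ 2 + cI * cII)))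
    (∀ ql qh : ℝ, 0 ≤ ql → ql ≤ qh → qh ≤ 1 →
      L3 cI cII ΔII qlo (2 * qlo) ≤ L3 cI cII ΔII ql qh) ∧
    (∀ ql qh : ℝ, 0 ≤ ql → ql ≤ qh → qh ≤ 1 →
      L3 cI cII ΔII ql qh = L3 cI cII ΔII qlo (2 * qlo) →
      qh = 2 * ql ∧ ql = qlo) := by
  intro qlo
  set A := cI * cII / (cI + cII)
  set B := cI * ((cII + ΔII) ^ 2 + cI * cII) / (cI + cII + ΔII) ^ 2
  have hA : 0 < A := by positivity
  have hB : 0 < B := by positivity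
  have hX : 0 ≤ cII * (cI + cII + ΔII) ^ 2 / ((cI + cII) * ((cII + ΔII) ^ 2 + cI * cII)) := by
    positivity
  have hqlo₀ : 0 ≤ qlo := by positivity
  have hqlo₁ : 2 * qlo ≤ 1 := by
    rw [mul_one_div, div_le_one (by linarith)]
    linarith
  have hq : A * qlo = B * (1 - 2 * qlo) := by
    simp only [A, B, qlo]
    field_simp
    ring
  have hL3opt := L3_eq_threeCellLoss hcI hcII hΔ hqlo₀ (by linarith) hqlo₁
  refine ⟨fun ql qh h₀ h₁ h₂ => ?_, fun ql qh h₀ h₁ h₂ heq => ?_⟩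
  · rw [hL3opt, L3_eq_threeCellLoss hcI hcII hΔ h₀ h₁ h₂]
    exact div_le_div_of_nonneg_right (threeCellLoss_le hA.le hB.le hq) zero_le_two
  · rw [hL3opt, L3_eq_threeCellLoss hcI hcII hΔ h₀ h₁ h₂, div_left_inj' two_ne_zero] at heq
    obtain ⟨rfl, rfl⟩ := eq_of_threeCellLoss_eq hA hB hq heq
    exact ⟨rfl, rfl⟩
end

section
/- For the quadratic losses arising in the uniform example, the gain from adding a 'don't know' option is weakly larger under recommendation dependence: with α = c_I·c_II/(c_I+c_II) and β(Δ) = c_I·((c_II+Δ)² + c_I·c_II)/(c_I+c_II+Δ)², the quantity min_{q∈[0,1]}[α q² + β(Δ)(1-q)²] − min_{x∈[0,1]}[ (β(Δ)/2)(1-2x)² + α x² ] is weakly increasing in Δ ≥ 0. -/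
lemma two_level_inf (α β : ℝ) (hα : 0 < α) (hβ : 0 < β) :
    sInf ((fun q => α * q ^ 2 + β * (1 - q) ^ 2) '' Set.Icc (0:ℝ) 1)
      = α * β / (α + β) := by
  have hab : 0 < α + β := by linarith
  refine IsLeast.csInf_eq ⟨?_, ?_⟩
  · refine ⟨β / (α + β), ⟨?_, ?_⟩, ?_⟩
    · positivity
    · rw [div_le_one hab]; linarith
    · field_simp
      ring
  · rintro y ⟨q, _, rfl⟩
    beta_reduce
    rw [div_le_iff₀ hab]
    nlinarith [sq_nonneg ((α + β) * q - β)]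

lemma three_level_inf (α β : ℝ) (hα : 0 < α) (hβ : 0 < β) :
    sInf ((fun x => β / 2 * (1 - 2 * x) ^ 2 + α * x ^ 2) '' Set.Icc (0:ℝ) 1)
      = α * β / (2 * (α + 2 * β)) := by
  have hab : 0 < α + 2 * β := by linarith
  refine IsLeast.csInf_eq ⟨?_, ?_⟩
  · refine ⟨β / (α + 2 * β), ⟨?_, ?_⟩, ?_⟩
    · positivity
    · rw [div_le_one hab]; linarith
    · field_simp
      ring
  · rintro y ⟨x, _, rfl⟩
    beta_reduce
    rw [div_le_iff₀ (by linarith : (0:ℝ) < 2 * (α + 2 * β))]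
    nlinarith [sq_nonneg ((α + 2 * β) * x - β)]

lemma gain_mono (α b₁ b₂ : ℝ) (hα : 0 < α) (h1 : 0 < b₁) (h2 : 0 < b₂)
    (h12 : b₁ ≤ b₂) :
    α * b₁ / (α + b₁) - α * b₁ / (2 * (α + 2 * b₁))
      ≤ α * b₂ / (α + b₂) - α * b₂ / (2 * (α + 2 * b₂)) := by
  have e1 : α * b₁ / (α + b₁) - α * b₁ / (2 * (α + 2 * b₁))
      = α * b₁ * (α + 3 * b₁) / (2 * (α + b₁) * (α + 2 * b₁)) := by
    field_simp
    ring
  have e2 : α * b₂ / (α + b₂) - α * b₂ / (2 * (α + 2 * b₂))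
      = α * b₂ * (α + 3 * b₂) / (2 * (α + b₂) * (α + 2 * b₂)) := by
    field_simp
    ring
  rw [e1, e2, div_le_div_iff₀ (by positivity) (by positivity)]
  nlinarith [mul_nonneg (sub_nonneg.2 h12)
    (by positivity : (0:ℝ) ≤ α ^ 3 + 3 * α ^ 2 * (b₁ + b₂) + 7 * α * b₁ * b₂),
    sq_nonneg (b₂ - b₁), mul_pos h1 h2]

/-- The gain from adding a "don't know" option is weakly larger
under recommendation dependence: with α = cI·cII/(cI+cII) and
β(Δ) = cI·((cII+Δ)² + cI·cII)/(cI+cII+Δ)², the difference between the optimal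
two-level expected loss and the optimal three-level expected loss is weakly
increasing in Δ ≥ 0. -/
theorem gain_from_dont_know_increasing
    (cI cII : ℝ) (hcI : 0 < cI) (hcII : 0 < cII) :
    let α := cI * cII / (cI + cII)
    let β : ℝ → ℝ := fun Δ => cI * ((cII + Δ) ^ 2 + cI * cII) / (cI + cII + Δ) ^ 2
    MonotoneOn (fun Δ =>
      sInf ((fun q => α * q ^ 2 + β Δ * (1 - q) ^ 2) '' Set.Icc (0:ℝ) 1)
        - sInf ((fun x => β Δ / 2 * (1 - 2 * x) ^ 2 + α * x ^ 2) '' Set.Icc (0:ℝ) 1))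
      (Set.Ici 0) := by
  intro α β
  have hα : 0 < α := by positivity
  have hβ : ∀ Δ : ℝ, 0 ≤ Δ → 0 < β Δ := by
    intro Δ hΔ
    have h1 : (0:ℝ) < (cII + Δ) ^ 2 + cI * cII := by positivity
    have h2 : (0:ℝ) < (cI + cII + Δ) ^ 2 := by positivity
    exact div_pos (mul_pos hcI h1) h2
  intro Δ₁ hΔ₁ Δ₂ hΔ₂ h12
  simp only [Set.mem_Ici] at hΔ₁ hΔ₂
  have hβ1 := hβ Δ₁ hΔ₁
  have hβ2 := hβ Δ₂ hΔ₂
  have hβmono : β Δ₁ ≤ β Δ₂ := by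
    show cI * ((cII + Δ₁) ^ 2 + cI * cII) / (cI + cII + Δ₁) ^ 2
      ≤ cI * ((cII + Δ₂) ^ 2 + cI * cII) / (cI + cII + Δ₂) ^ 2
    rw [div_le_div_iff₀ (by positivity) (by positivity)]
    nlinarith [mul_nonneg (mul_nonneg hcI.le (sub_nonneg.2 h12))
      (by positivity : (0:ℝ) ≤ (cI + cII) * (Δ₁ + Δ₂) + 2 * Δ₁ * Δ₂)]
  simp only [two_level_inf α _ hα hβ1, two_level_inf α _ hα hβ2,
    three_level_inf α _ hα hβ1, three_level_inf α _ hα hβ2]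
  exact gain_mono α (β Δ₁) (β Δ₂) hα hβ1 hβ2 hβmono
end

section
/- In the uniform example, the equilibrium optimal threshold q̄*(Δ_II) = (1+g)/(2+g), g = c_I·Δ_II²/(c_II·(c_I+c_II+Δ_II)²), yields expected loss L(q̄*(Δ_II)) that is weakly increasing in Δ_II and is strictly greater than the Δ_II = 0 optimum c_I·c_II/(4(c_I+c_II)) whenever Δ_II > 0. -/
/-- The equilibrium expected loss L(q̄*(Δ_II)) at the optimal
threshold q̄*(Δ_II) = (1+g)/(2+g), g = cI·Δ_II²/(cII·(cI+cII+Δ_II)²), is weakly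
increasing in Δ_II on [0,∞) and strictly exceeds the Δ_II = 0 optimum
cI·cII/(4(cI+cII)) whenever Δ_II > 0. -/
theorem equilibrium_loss_increasing
    (cI cII : ℝ) (hcI : 0 < cI) (hcII : 0 < cII) :
    let L : ℝ → ℝ → ℝ := fun Δ q =>
      cI * cII / (cI + cII) * q ^ 2
        + cI * ((cII + Δ) ^ 2 + cI * cII) / (cI + cII + Δ) ^ 2 * (1 - q) ^ 2
    let g : ℝ → ℝ := fun Δ => cI * Δ ^ 2 / (cII * (cI + cII + Δ) ^ 2)
    let qstar : ℝ → ℝ := fun Δ => (1 + g Δ) / (2 + g Δ)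
    MonotoneOn (fun Δ => L Δ (qstar Δ)) (Set.Ici 0) ∧
    ∀ Δ : ℝ, 0 < Δ → cI * cII / (4 * (cI + cII)) < L Δ (qstar Δ) := by
  intro L g qstar
  have hc : (0:ℝ) < cI + cII := by linarith
  have hA : (0:ℝ) < cI * cII / (cI + cII) := by positivity
  have hgnn : ∀ Δ : ℝ, 0 ≤ Δ → 0 ≤ g Δ := by
    intro Δ hΔ
    have hs : (0:ℝ) < cI + cII + Δ := by linarith
    simp only [g]
    positivity
  -- closed form
  have key : ∀ Δ : ℝ, 0 ≤ Δ →
      L Δ (qstar Δ) = cI * cII / (cI + cII) * ((1 + g Δ) / (2 + g Δ)) := by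
    intro Δ hΔ
    have hs : (0:ℝ) < cI + cII + Δ := by linarith
    have hB : cI * ((cII + Δ) ^ 2 + cI * cII) / (cI + cII + Δ) ^ 2
        = cI * cII / (cI + cII) * (1 + g Δ) := by
      simp only [g]
      field_simp
      ring
    have ht : 0 ≤ g Δ := hgnn Δ hΔ
    have h2t : (2 + g Δ) ≠ 0 := by positivity
    simp only [L, qstar]
    rw [hB]
    field_simp
    ring
  have gmono : ∀ Δ₁ Δ₂ : ℝ, 0 ≤ Δ₁ → Δ₁ ≤ Δ₂ → g Δ₁ ≤ g Δ₂ := by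
    intro Δ₁ Δ₂ h1 h12
    have h2 : (0:ℝ) ≤ Δ₂ := le_trans h1 h12
    have hs1 : (0:ℝ) < cI + cII + Δ₁ := by linarith
    have hs2 : (0:ℝ) < cI + cII + Δ₂ := by linarith
    simp only [g]
    rw [div_le_div_iff₀ (by positivity) (by positivity)]
    have hprod : Δ₁ * (cI + cII + Δ₂) ≤ Δ₂ * (cI + cII + Δ₁) := by nlinarith
    have hsq : (Δ₁ * (cI + cII + Δ₂)) ^ 2 ≤ (Δ₂ * (cI + cII + Δ₁)) ^ 2 :=
      pow_le_pow_left₀ (mul_nonneg h1 hs2.le) hprod 2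
    nlinarith [mul_le_mul_of_nonneg_left hsq (by positivity : (0:ℝ) ≤ cI * cII)]
  have ratmono : ∀ s t : ℝ, 0 ≤ s → s ≤ t → (1 + s) / (2 + s) ≤ (1 + t) / (2 + t) := by
    intro s t hs hst
    have ht : (0:ℝ) ≤ t := le_trans hs hst
    rw [div_le_div_iff₀ (by linarith) (by linarith)]
    nlinarith
  constructor
  · intro Δ₁ h1 Δ₂ h2 h12
    simp only [Set.mem_Ici] at h1 h2
    show L Δ₁ (qstar Δ₁) ≤ L Δ₂ (qstar Δ₂)
    rw [key Δ₁ h1, key Δ₂ h2]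
    exact mul_le_mul_of_nonneg_left (ratmono _ _ (hgnn Δ₁ h1) (gmono Δ₁ Δ₂ h1 h12)) hA.le
  · intro Δ hΔ
    rw [key Δ hΔ.le]
    have ht : 0 ≤ g Δ := hgnn Δ hΔ.le
    have hhalf : (1:ℝ)/2 ≤ (1 + g Δ) / (2 + g Δ) := by
      rw [div_le_div_iff₀ (by norm_num) (by linarith)]
      linarith
    have h1 : cI * cII / (4 * (cI + cII)) < cI * cII / (cI + cII) * (1/2) := by
      rw [div_mul_eq_mul_div, div_lt_div_iff₀ (by positivity) (by positivity)]
      nlinarith [mul_pos (mul_pos hcI hcII) hc]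
    calc cI * cII / (4 * (cI + cII)) < cI * cII / (cI + cII) * (1/2) := h1
      _ ≤ cI * cII / (cI + cII) * ((1 + g Δ) / (2 + g Δ)) :=
        mul_le_mul_of_nonneg_left hhalf hA.le
end
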